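/- arXiv:2007.01996 — 4 statements merged into one kernel-verified Lean document; each statement's English description precedes it below -/
import Mathlib

section
/- Let M be an n×n complex matrix and β ∈ ℂ. A complex number λ is an eigenvalue of the 2n×2n block matrix T_N(M,β) = [[(1+β)M, −βIₙ],[Iₙ, 0]] if and only if there exists an eigenvalue μ of M such that λ² − (1+β)μλ + β = 0. -/
/-- `lam` is an eigenvalue of the square complex matrix `A`. -/
def IsEigenvalue {n : Type*} [Fintype n] (A : Matrix n n ℂ) (lam : ℂ) : Prop :=
  ∃ v : n → ℂ, v ≠ 0 ∧ A.mulVec v = lam • v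

/-- The block matrix `T_N(M,β) = [[(1+β)M, −βI],[I, 0]]` (Jacobian of sNGMRES-R(1)). -/
noncomputable def TNblock {n : ℕ} (M : Matrix (Fin n) (Fin n) ℂ) (β : ℂ) :
    Matrix (Fin n ⊕ Fin n) (Fin n ⊕ Fin n) ℂ :=
  Matrix.fromBlocks ((1 + β) • M) ((-β) • (1 : Matrix (Fin n) (Fin n) ℂ))
    (1 : Matrix (Fin n) (Fin n) ℂ) 0

/-!
An eigenvector of `T_N(M,β)` for `λ` has the form `(λ w, w)`, and its first block row says
`(1+β) λ M w = (λ² + β) w`. If `(1+β) λ ≠ 0` this makes `w` an eigenvector of `M` for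
`μ = (λ² + β) / ((1+β) λ)`; if `(1+β) λ = 0` it forces `λ² + β = 0`, and then every eigenvalue
`μ` of `M` solves the quadratic. Conversely an eigenvector `w` of `M` for such a `μ` gives the
eigenvector `(λ w, w)` of `T_N(M,β)`.
-/

open Matrix

theorem smul_sumElim {α β M γ : Type*} [SMul M γ] (c : M) (f : α → γ) (g : β → γ) :
    c • Sum.elim f g = Sum.elim (c • f) (c • g) := by
  ext (x | x) <;> rfl

section IsEigenvalue

variable {ι : Type*} [Fintype ι]

theorem exists_isEigenvalue [Nonempty ι] (M : Matrix ι ι ℂ) : ∃ μ, IsEigenvalue M μ := by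
  obtain ⟨μ, hμ⟩ := Module.End.exists_eigenvalue M.mulVecLin
  obtain ⟨w, hw⟩ := hμ.exists_hasEigenvector
  exact ⟨μ, w, hw.2, hw.apply_eq_smul⟩

theorem exists_isEigenvalue_of_smul_mulVec_eq_smul {M : Matrix ι ι ℂ} {w : ι → ℂ} {a b : ℂ}
    (hw : w ≠ 0) (h : a • M *ᵥ w = b • w) : ∃ μ, IsEigenvalue M μ ∧ b = a * μ := by
  by_cases ha : a = 0
  · have hb : b = 0 :=
      (smul_eq_zero.mp (by rw [← h, ha, zero_smul] : b • w = 0)).resolve_right hw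
    obtain ⟨i, -⟩ := Function.ne_iff.mp hw
    have : Nonempty ι := ⟨i⟩
    obtain ⟨μ, hμ⟩ := exists_isEigenvalue M
    exact ⟨μ, hμ, by simp [ha, hb]⟩
  · refine ⟨b / a, ⟨w, hw, ?_⟩, by field_simp⟩
    rw [← inv_smul_smul₀ ha (M *ᵥ w), h, smul_smul, inv_mul_eq_div]

end IsEigenvalue

theorem TNblock_mulVec_sumElim {n : ℕ} (M : Matrix (Fin n) (Fin n) ℂ) (β : ℂ)
    (u w : Fin n → ℂ) :
    TNblock M β *ᵥ Sum.elim u w = Sum.elim ((1 + β) • M *ᵥ u - β • w) u := by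
  simp [TNblock, fromBlocks_mulVec, smul_mulVec, neg_mulVec, sub_eq_add_neg]

theorem TNblock_mulVec_sumElim_eq_smul_iff {n : ℕ} (M : Matrix (Fin n) (Fin n) ℂ)
    (β lam : ℂ) (u w : Fin n → ℂ) :
    TNblock M β *ᵥ Sum.elim u w = lam • Sum.elim u w ↔
      u = lam • w ∧ ((1 + β) * lam) • M *ᵥ w = (lam ^ 2 + β) • w := by
  rw [TNblock_mulVec_sumElim, smul_sumElim, Sum.elim_eq_iff]
  constructor
  · rintro ⟨h₁, rfl⟩
    refine ⟨rfl, ?_⟩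
    rw [mulVec_smul, smul_smul, sub_eq_iff_eq_add] at h₁
    rw [h₁]
    module
  · rintro ⟨rfl, h⟩
    refine ⟨?_, rfl⟩
    rw [mulVec_smul, smul_smul, h]
    module

theorem stmt8 (n : ℕ) (M : Matrix (Fin n) (Fin n) ℂ) (β lam : ℂ) :
    IsEigenvalue (TNblock M β) lam ↔
      ∃ μ : ℂ, IsEigenvalue M μ ∧ lam ^ 2 - (1 + β) * μ * lam + β = 0 := by
  constructor
  · rintro ⟨v, hv, hTv⟩
    rw [← Sum.elim_comp_inl_inr v, TNblock_mulVec_sumElim_eq_smul_iff] at hTv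
    obtain ⟨hu, hw⟩ := hTv
    have hw0 : v ∘ Sum.inr ≠ 0 := fun h0 ↦
      hv (by rw [← Sum.elim_comp_inl_inr v, hu, h0, smul_zero, Sum.elim_zero_zero])
    obtain ⟨μ, hμ, hquad⟩ := exists_isEigenvalue_of_smul_mulVec_eq_smul hw0 hw
    exact ⟨μ, hμ, by linear_combination hquad⟩
  · rintro ⟨μ, ⟨w, hw, hMw⟩, hquad⟩
    refine ⟨Sum.elim (lam • w) w, fun h ↦ hw (by simpa using congrArg (· ∘ Sum.inr) h), ?_⟩
    rw [TNblock_mulVec_sumElim_eq_smul_iff, hMw, smul_smul]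
    exact ⟨rfl, by congr 1; linear_combination -hquad⟩
end

section
/- Let H be an n×n real symmetric positive definite matrix with smallest eigenvalue ℓ and largest eigenvalue L, 0 < ℓ < L, and write κ = L/ℓ. Then the infimum over α > 0 and β ∈ ℝ of the spectral radius ρ(T(I−αH, β)) equals (√(3κ+1) − 2)/√(3κ+1) = 1 − √(4ℓ/(3L+ℓ)), it is attained at α* = 4/(3L+ℓ) and β* = (√(3κ+1) − 2)/(√(3κ+1) + 2), and these are the unique optimal parameters: if ρ(T(I−αH, β)) = 1 − √(4ℓ/(3L+ℓ)) with α > 0, then α = α* and β = β*. Moreover 1 − √(4ℓ/(3L+ℓ)) < 1 − √(ℓ/L). -/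
/-- `lam : ℂ` is an eigenvalue (over `ℂ`) of the square real matrix `A`. -/
def IsCEigenvalue {n : Type*} [Fintype n] (A : Matrix n n ℝ) (lam : ℂ) : Prop :=
  ∃ v : n → ℂ, v ≠ 0 ∧ (A.map (Complex.ofReal)).mulVec v = lam • v

/-- The spectral radius of a square real matrix: the maximum modulus of its
eigenvalues over `ℂ`. -/
noncomputable def specRad {n : Type*} [Fintype n] (A : Matrix n n ℝ) : ℝ :=
  sSup {r : ℝ | ∃ lam : ℂ, IsCEigenvalue A lam ∧ r = ‖lam‖}

/-- The block matrix `T(M,β) = [[(1+β)M, −βM],[I, 0]]` (Jacobian of sAA(1)). -/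
noncomputable def TAA {n : ℕ} (M : Matrix (Fin n) (Fin n) ℝ) (β : ℝ) :
    Matrix (Fin n ⊕ Fin n) (Fin n ⊕ Fin n) ℝ :=
  Matrix.fromBlocks ((1 + β) • M) ((-β) • M) (1 : Matrix (Fin n) (Fin n) ℝ) 0

/-!
The eigenvalues of `T(M, β)` are `0` and the roots of `z² - (1 + β) m z + β m`, `m` running over
the eigenvalues of `M`; for `M = I - αH` these are the real numbers `m = 1 - αμ`. Both roots of
such a quadratic have modulus at most `ρ > 0` iff Jury's three conditions hold.

Write `ρ = 1 - s`, `t = αℓ` (so `αL = κt`) and `c = √(4ℓ/(3L+ℓ))`, i.e. `c²(3κ+1) = 4`, and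
suppose `s ≥ c`. The conditions for `μ = ℓ` give `s² ≤ t`, those for `μ = L` give
`κt ≤ (2 - s)²`, and eliminating `β` between the condition at `+ρ` for `ℓ` and the one at `-ρ`
for `L` leaves a bound convex in `t`. It fails at `κt = (2 - s)²`, and at `t = s²` it is
`(3κ+1)s² ≤ 4`, which fails unless `s = c`; so by convexity `t = s²`, `s = c`, and `β` is then
forced. Conversely, at `α = 4/(3L+ℓ)`, `β = (1 - c)/(1 + c)` the conditions at radius `1 - c`
reduce to `c² ≤ αμ ≤ (4 - c²)/3`, i.e. to `ℓ ≤ μ ≤ L`.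
-/

/-- Jury's conditions at radius `ρ` for the real quadratic `z² - b z + p`: for `0 < ρ` they hold
iff both roots have modulus at most `ρ`. -/
def JuryConditions (b p ρ : ℝ) : Prop :=
  0 ≤ ρ ^ 2 - b * ρ + p ∧ 0 ≤ ρ ^ 2 + b * ρ + p ∧ |p| ≤ ρ ^ 2

lemma juryConditions_of_abs_le {r₁ r₂ ρ : ℝ} (h₁ : |r₁| ≤ ρ) (h₂ : |r₂| ≤ ρ) :
    JuryConditions (r₁ + r₂) (r₁ * r₂) ρ := by
  obtain ⟨h₁l, h₁u⟩ := abs_le.mp h₁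
  obtain ⟨h₂l, h₂u⟩ := abs_le.mp h₂
  refine ⟨?_, ?_, ?_⟩
  · nlinarith [mul_nonneg (sub_nonneg.2 h₁u) (sub_nonneg.2 h₂u)]
  · nlinarith [mul_nonneg (neg_le_iff_add_nonneg.1 h₁l) (neg_le_iff_add_nonneg.1 h₂l)]
  · rw [abs_mul, sq]
    exact mul_le_mul h₁ h₂ (abs_nonneg _) ((abs_nonneg _).trans h₁)

lemma juryConditions_of_forall_norm_le {b p ρ : ℝ}
    (h : ∀ z : ℂ, z ^ 2 - b * z + p = 0 → ‖z‖ ≤ ρ) : JuryConditions b p ρ := by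
  have real_root : ∀ x : ℝ, x ^ 2 - b * x + p = 0 → |x| ≤ ρ := fun x hx => by
    simpa using h x (by exact_mod_cast hx)
  rcases le_or_gt 0 (b ^ 2 - 4 * p) with hd | hd
  · have hr := Real.sq_sqrt hd
    set r := √(b ^ 2 - 4 * p)
    have hJ := juryConditions_of_abs_le (real_root ((b + r) / 2) (by linear_combination hr / 4))
      (real_root ((b - r) / 2) (by linear_combination hr / 4))
    rwa [show (b + r) / 2 + (b - r) / 2 = b by ring,
      show (b + r) / 2 * ((b - r) / 2) = p by linear_combination -hr / 4] at hJ
  · -- the roots are `b / 2 ± i y` with `b² / 4 + y² = p`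
    have hy := Real.sq_sqrt (by linarith : 0 ≤ p - b ^ 2 / 4)
    set y := √(p - b ^ 2 / 4)
    have hz := h ⟨b / 2, y⟩ (by
      apply Complex.ext <;> simp [sq] <;> nlinarith [hy])
    have hnorm : ‖(⟨b / 2, y⟩ : ℂ)‖ ^ 2 = p := by
      rw [Complex.sq_norm, Complex.normSq_mk]; linear_combination hy
    refine ⟨by nlinarith [sq_nonneg (ρ - b / 2)], by nlinarith [sq_nonneg (ρ + b / 2)], ?_⟩
    rw [abs_of_pos (by nlinarith), ← hnorm]
    exact pow_le_pow_left₀ (norm_nonneg _) hz 2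

lemma norm_le_of_juryConditions {b p ρ : ℝ} (hρ : 0 < ρ) (h : JuryConditions b p ρ) {z : ℂ}
    (hz : z ^ 2 - b * z + p = 0) : ‖z‖ ≤ ρ := by
  obtain ⟨h₁, h₂, hp⟩ := h
  have hp' := (abs_le.mp hp).2
  have hre := congrArg Complex.re hz
  have him := congrArg Complex.im hz
  simp only [sq, Complex.sub_re, Complex.add_re, Complex.mul_re, Complex.ofReal_re,
    Complex.ofReal_im, Complex.sub_im, Complex.add_im, Complex.mul_im, Complex.zero_re,
    Complex.zero_im] at hre him
  rcases eq_or_ne z.im 0 with h0 | h0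
  · rw [← Complex.re_add_im z, h0, Complex.ofReal_zero, zero_mul, add_zero, Complex.norm_real,
      Real.norm_eq_abs, abs_le]
    rw [h0] at hre
    set x := z.re
    have h₁' : 0 ≤ (x - ρ) * ((b - x) - ρ) := by linear_combination h₁ + hre
    have h₂' : 0 ≤ (x + ρ) * ((b - x) + ρ) := by linear_combination h₂ + hre
    -- the other root is `b - x`; if `|x| > ρ` it lies beyond `ρ` on the same side, and then
    -- `x (b - x) = p > ρ²`
    constructor <;> by_contra! hx
    · have hy : b - x ≤ -ρ := by nlinarith
      nlinarith [mul_le_mul_of_nonpos_left hy (by linarith : x ≤ 0)]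
    · have hy : ρ ≤ b - x := by nlinarith
      nlinarith [mul_le_mul_of_nonneg_left hy (by linarith : 0 ≤ x)]
  · -- a non-real root has real part `b / 2` and `‖z‖² = p`
    have hb : 2 * z.re = b := mul_right_cancel₀ h0 (by linear_combination him)
    have hnorm : ‖z‖ ^ 2 = p := by
      rw [Complex.sq_norm, Complex.normSq_apply]; linear_combination -hre + z.re * hb
    nlinarith [norm_nonneg z]

section Optimum

variable {κ c s t u β : ℝ}

lemma juryConditions_optimal (hc0 : 0 ≤ c) (hc1 : c ≤ 1) (ht : c ^ 2 ≤ t)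
    (ht' : 3 * t ≤ 4 - c ^ 2) :
    JuryConditions ((1 + (1 - c) / (1 + c)) * (1 - t)) ((1 - c) / (1 + c) * (1 - t)) (1 - c) := by
  have hc : 0 < 1 + c := by linarith
  refine ⟨?_, ?_, abs_le.mpr ⟨?_, ?_⟩⟩
  all_goals
    rw [← sub_nonneg]
    field_simp
  · nlinarith [mul_nonneg (sub_nonneg.2 hc1) (sub_nonneg.2 ht)]
  · nlinarith [mul_nonneg (sub_nonneg.2 hc1) (sub_nonneg.2 ht')]
  · nlinarith [mul_nonneg (sub_nonneg.2 hc1) (sub_nonneg.2 ht')]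
  · nlinarith [mul_nonneg (sub_nonneg.2 hc1) (sub_nonneg.2 ht)]

lemma sq_le_of_juryConditions (hs0 : 0 < s) (hs1 : s < 1)
    (h : JuryConditions ((1 + β) * (1 - t)) (β * (1 - t)) (1 - s)) : s ^ 2 ≤ t := by
  obtain ⟨h₁, -, h₃⟩ := h
  have h₃' := mul_nonneg hs0.le (sub_nonneg.2 (abs_le.mp h₃).2)
  have : 0 ≤ (1 - s) * (t - s ^ 2) := by linear_combination h₁ + h₃'
  exact sub_nonneg.1 ((mul_nonneg_iff_of_pos_left (by linarith)).mp this)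

lemma le_sq_of_juryConditions (hs : s < 1)
    (h : JuryConditions ((1 + β) * (1 - u)) (β * (1 - u)) (1 - s)) : u ≤ (2 - s) ^ 2 := by
  obtain ⟨-, h₂, h₃⟩ := h
  have h₃' := mul_nonneg (by linarith : 0 ≤ 2 - s) (sub_nonneg.2 (abs_le.mp h₃).2)
  have : 0 ≤ (1 - s) * ((2 - s) ^ 2 - u) := by linear_combination h₂ + h₃'
  exact sub_nonneg.1 ((mul_nonneg_iff_of_pos_left (by linarith)).mp this)

lemma beta_free_bound_of_juryConditions (hs0 : 0 ≤ s) (hs1 : s < 1) (hu : 1 ≤ u) (ht : t ≤ 1)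
    (h₁ : JuryConditions ((1 + β) * (1 - t)) (β * (1 - t)) (1 - s))
    (h₂ : JuryConditions ((1 + β) * (1 - u)) (β * (1 - u)) (1 - s)) :
    0 ≤ (u - 1) * (2 - s) * (t - s) + (1 - t) * s * (2 - s - u) := by
  have e₁ := mul_nonneg (mul_nonneg (sub_nonneg.2 hu) (by linarith : 0 ≤ 2 - s)) h₁.1
  have e₂ := mul_nonneg (mul_nonneg (sub_nonneg.2 ht) hs0) h₂.2.1
  have : 0 ≤ (1 - s) * ((u - 1) * (2 - s) * (t - s) + (1 - t) * s * (2 - s - u)) := by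
    linear_combination e₁ + e₂
  exact (mul_nonneg_iff_of_pos_left (by linarith)).mp this

lemma lt_one_of_sq_mul_eq_four (hκ : 1 < κ) (hc : c ^ 2 * (3 * κ + 1) = 4) : c < 1 := by
  by_contra! h
  nlinarith [one_le_pow₀ (n := 2) h]

lemma two_sub_sq_lt (hκ : 1 < κ) (hc0 : 0 < c) (hc : c ^ 2 * (3 * κ + 1) = 4) :
    (2 - c) ^ 2 < κ := by
  have hc1 := lt_one_of_sq_mul_eq_four hκ hc
  have : 3 * c ^ 2 * (κ - (2 - c) ^ 2) = (2 - c) * (1 - c) * (2 + 3 * c * (1 - c)) := by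
    linear_combination hc
  have : 0 < 3 * c ^ 2 * (κ - (2 - c) ^ 2) := by
    rw [this]
    exact mul_pos (mul_pos (by linarith) (by linarith)) (by nlinarith [mul_pos hc0 (sub_pos.2 hc1)])
  nlinarith

lemma three_mul_two_sub_sq_lt (hκ : 1 < κ) (hc0 : 0 < c) (hc : c ^ 2 * (3 * κ + 1) = 4)
    (hcs : c ≤ s) (hs1 : s < 1) : 3 * (2 - s) ^ 2 < κ * s * (4 - s) := by
  have hc1 := lt_one_of_sq_mul_eq_four hκ hc
  -- the difference is concave in `s`, positive at `s = c` and at `s = 1`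
  have hψc : 3 * c * (κ * c * (4 - c) - 3 * (2 - c) ^ 2) = 8 * (2 - c) * (1 - c) ^ 2 := by
    linear_combination (4 - c) * hc
  have hψc' : 0 < κ * c * (4 - c) - 3 * (2 - c) ^ 2 := by
    have : 0 < 8 * (2 - c) * (1 - c) ^ 2 := by
      have := pow_pos (sub_pos.2 hc1) 2
      exact mul_pos (by linarith) this
    nlinarith
  have : (1 - c) * (κ * s * (4 - s) - 3 * (2 - s) ^ 2) =
      (1 - s) * (κ * c * (4 - c) - 3 * (2 - c) ^ 2) + (s - c) * (3 * κ - 3)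
      + (κ + 3) * (s - c) * (1 - s) * (1 - c) := by ring
  have : 0 < (1 - c) * (κ * s * (4 - s) - 3 * (2 - s) ^ 2) := by
    rw [this]
    have h₁ := mul_pos (sub_pos.2 hs1) hψc'
    have h₂ := mul_nonneg (sub_nonneg.2 hcs) (by linarith : (0 : ℝ) ≤ 3 * κ - 3)
    have h₃ := mul_nonneg (mul_nonneg (mul_nonneg (by linarith : (0 : ℝ) ≤ κ + 3)
      (sub_nonneg.2 hcs)) (sub_pos.2 hs1).le) (sub_pos.2 hc1).le
    linarith
  nlinarith

lemma eq_sq_of_beta_free_bound (hκ : 0 < κ) (hs0 : 0 ≤ s) (hs1 : s < 1) (hst : s ^ 2 ≤ t)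
    (htκ : κ * t ≤ (2 - s) ^ 2) (hψ : 3 * (2 - s) ^ 2 < κ * s * (4 - s))
    (hs : 4 ≤ (3 * κ + 1) * s ^ 2)
    (hΓ : 0 ≤ (κ * t - 1) * (2 - s) * (t - s) + (1 - t) * s * (2 - s - κ * t)) :
    t = s ^ 2 := by
  -- the bound `hΓ` is convex in `κ t ∈ [κ s², (2 - s)²]`, nonpositive at the left end point
  -- and negative at the right one, so it can only hold at the left end point
  set X := (2 - s) ^ 2 - κ * t
  set Y := κ * t - κ * s ^ 2
  have hX : 0 ≤ X := by linarith
  have hY : 0 ≤ Y := by nlinarith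
  have interpolation : X * (κ * (s * (1 - s) * (4 - (3 * κ + 1) * s ^ 2))) =
      (X + Y) * (κ * ((κ * t - 1) * (2 - s) * (t - s) + (1 - t) * s * (2 - s - κ * t)))
      + Y * ((1 - s) * (2 - s) * (κ * s * (4 - s) - 3 * (2 - s) ^ 2))
      + 2 * X * Y * (X + Y) := by
    ring
  have hleft : κ * (s * (1 - s) * (4 - (3 * κ + 1) * s ^ 2)) ≤ 0 :=
    mul_nonpos_of_nonneg_of_nonpos hκ.le
      (mul_nonpos_of_nonneg_of_nonpos (mul_nonneg hs0 (by linarith)) (by linarith))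
  have hright : 0 < (1 - s) * (2 - s) * (κ * s * (4 - s) - 3 * (2 - s) ^ 2) :=
    mul_pos (mul_pos (by linarith) (by linarith)) (sub_pos.2 hψ)
  have := mul_nonneg (add_nonneg hX hY) (mul_nonneg hκ.le hΓ)
  have := mul_nonneg (mul_nonneg (mul_nonneg zero_le_two hX) hY) (add_nonneg hX hY)
  have := mul_nonpos_of_nonneg_of_nonpos hX hleft
  have hY0 : Y = 0 := le_antisymm (by nlinarith) hY
  have : κ * (t - s ^ 2) = 0 := by linear_combination hY0
  linarith [(mul_eq_zero.mp this).resolve_left hκ.ne']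

theorem eq_of_juryConditions_pair (hκ : 1 < κ) (hc0 : 0 < c) (hc : c ^ 2 * (3 * κ + 1) = 4)
    (hcs : c ≤ s) (hs1 : s < 1)
    (h₁ : JuryConditions ((1 + β) * (1 - t)) (β * (1 - t)) (1 - s))
    (h₂ : JuryConditions ((1 + β) * (1 - κ * t)) (β * (1 - κ * t)) (1 - s)) :
    s = c ∧ t = c ^ 2 ∧ β * (1 + c) = 1 - c := by
  have hc1 := lt_one_of_sq_mul_eq_four hκ hc
  have hs0 : 0 < s := hc0.trans_le hcs
  have hst : s ^ 2 ≤ t := sq_le_of_juryConditions hs0 hs1 h₁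
  have htκ : κ * t ≤ (2 - s) ^ 2 := le_sq_of_juryConditions hs1 h₂
  have hcs2 : c ^ 2 ≤ s ^ 2 := pow_le_pow_left₀ hc0.le hcs 2
  have hκt : 1 ≤ κ * t := by nlinarith
  have ht1 : t ≤ 1 := by
    nlinarith [two_sub_sq_lt hκ hc0 hc, pow_le_pow_left₀ (by linarith : 0 ≤ 2 - s)
      (by linarith : 2 - s ≤ 2 - c) 2]
  have hΓ := beta_free_bound_of_juryConditions hs0.le hs1 hκt ht1 h₁ h₂
  have ht : t = s ^ 2 := eq_sq_of_beta_free_bound (by linarith) hs0.le hs1 hst htκ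
    (three_mul_two_sub_sq_lt hκ hc0 hc hcs hs1) (by nlinarith) hΓ
  have hsc : s ≤ c := by
    rw [ht] at hΓ
    have : 0 ≤ s * (1 - s) * (4 - (3 * κ + 1) * s ^ 2) := by linear_combination hΓ
    have := nonneg_of_mul_nonneg_right this (mul_pos hs0 (by linarith))
    exact (pow_le_pow_iff_left₀ hs0.le hc0.le two_ne_zero).mp (by nlinarith)
  obtain rfl : s = c := le_antisymm hsc hcs
  refine ⟨rfl, ht, ?_⟩
  -- equality in `sq_le_of_juryConditions` forces `β (1 - s²) = (1 - s)²`
  subst ht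
  obtain ⟨h₁, -, h₃⟩ := h₁
  have h₃' := (abs_le.mp h₃).2
  have : (1 - s) * (β * (1 + s) - (1 - s)) = 0 := by nlinarith
  linarith [(mul_eq_zero.mp this).resolve_left (by linarith)]

end Optimum

open Matrix Complex
open scoped ComplexOrder

section Complexify

variable {ι : Type*} [Fintype ι] {M : Matrix ι ι ℝ}

lemma map_ofReal_mulVec_ofReal (M : Matrix ι ι ℝ) (v : ι → ℝ) :
    M.map ofReal *ᵥ (ofReal ∘ v) = ofReal ∘ (M *ᵥ v) := by
  ext i; exact (RingHom.map_mulVec ofRealHom M v i).symm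

lemma Matrix.IsSymm.im_eq_zero_of_mulVec_eq_smul (hM : M.IsSymm) {m : ℂ} {v : ι → ℂ}
    (hv : v ≠ 0) (h : M.map ofReal *ᵥ v = m • v) : m.im = 0 := by
  have hH : (M.map ofReal).IsHermitian :=
    (isHermitian_iff_isSymm.mpr hM).map _ fun x => (conj_ofReal x).symm
  have him := hH.im_star_dotProduct_mulVec_self v
  obtain ⟨hpos, hreal⟩ := Complex.lt_def.mp (dotProduct_star_self_pos_iff.mpr hv)
  rw [h, dotProduct_smul, smul_eq_mul] at him
  simp only [RCLike.im_to_complex, mul_im, ← hreal, zero_re, zero_im, mul_zero, zero_add]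
    at him hpos
  exact (mul_eq_zero.mp him).resolve_right hpos.ne'

lemma exists_mulVec_eq_smul_of_map_ofReal {r : ℝ} {v : ι → ℂ} (hv : v ≠ 0)
    (h : M.map ofReal *ᵥ v = (r : ℂ) • v) : ∃ w : ι → ℝ, w ≠ 0 ∧ M *ᵥ w = r • w := by
  have hre : M *ᵥ (fun i => (v i).re) = r • fun i => (v i).re := by
    ext i; simpa [mulVec, dotProduct, re_sum] using congrArg re (congrFun h i)
  have him : M *ᵥ (fun i => (v i).im) = r • fun i => (v i).im := by
    ext i; simpa [mulVec, dotProduct, im_sum] using congrArg im (congrFun h i)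
  by_cases ha : (fun i => (v i).re) = 0
  · refine ⟨_, fun hb => hv ?_, him⟩
    funext i
    exact Complex.ext (congrFun ha i) (congrFun hb i)
  · exact ⟨_, ha, hre⟩

end Complexify

section TAA

variable {n : ℕ} {M : Matrix (Fin n) (Fin n) ℝ} {β : ℝ}

lemma TAA_map_ofReal_mulVec (M : Matrix (Fin n) (Fin n) ℝ) (β : ℝ) (x y : Fin n → ℂ) :
    (TAA M β).map ofReal *ᵥ Sum.elim x y =
      Sum.elim ((1 + β : ℂ) • (M.map ofReal *ᵥ x) - (β : ℂ) • (M.map ofReal *ᵥ y)) x := by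
  have hsmul : ∀ r : ℝ, (r • M).map ofReal = (r : ℂ) • M.map ofReal := fun r => by ext; simp
  rw [TAA, fromBlocks_map, fromBlocks_mulVec, hsmul, hsmul]
  ext (i | i) <;> simp [sub_eq_add_neg, smul_mulVec, neg_mulVec]

lemma isCEigenvalue_TAA {m z : ℂ} {v : Fin n → ℂ} (hv : v ≠ 0)
    (hMv : M.map ofReal *ᵥ v = m • v) (hz : z ^ 2 - (1 + β) * m * z + β * m = 0) :
    IsCEigenvalue (TAA M β) z := by
  refine ⟨Sum.elim (z • v) v, fun h => hv (funext fun i => congrFun h (Sum.inr i)), ?_⟩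
  rw [TAA_map_ofReal_mulVec, mulVec_smul, hMv]
  ext (i | i) <;> simp
  linear_combination (-v i) * hz

lemma eq_zero_or_exists_of_isCEigenvalue_TAA {z : ℂ} (h : IsCEigenvalue (TAA M β) z) :
    z = 0 ∨ ∃ m : ℂ, ∃ v : Fin n → ℂ, v ≠ 0 ∧ M.map ofReal *ᵥ v = m • v ∧
      z ^ 2 - (1 + β) * m * z + β * m = 0 := by
  obtain ⟨w, hw, hTw⟩ := h
  rw [← Sum.elim_comp_inl_inr w, TAA_map_ofReal_mulVec] at hTw
  set y := w ∘ Sum.inr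
  -- the eigenvector is `(z y, y)` with `((1 + β) z - β) M y = z² y`
  have hx : w ∘ Sum.inl = z • y := funext fun i => by simpa using congrFun hTw (Sum.inr i)
  have hy : y ≠ 0 := fun hy => hw <| funext fun
    | .inl i => by simpa [hy] using congrFun hx i
    | .inr i => congrFun hy i
  have hMy : ((1 + β) * z - β) • (M.map ofReal *ᵥ y) = z ^ 2 • y := by
    ext i
    have := congrFun hTw (Sum.inl i)
    simp [hx, mulVec_smul] at this
    simp
    linear_combination this
  by_cases hc : (1 + β) * z - β = 0
  · left
    rw [hc, zero_smul, eq_comm, smul_eq_zero] at hMy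
    exact pow_eq_zero_iff two_ne_zero |>.mp (hMy.resolve_right hy)
  · refine Or.inr ⟨z ^ 2 / ((1 + β) * z - β), y, hy, ?_, ?_⟩
    · rw [div_eq_inv_mul, mul_smul, ← hMy, smul_smul, inv_mul_cancel₀ hc, one_smul]
    · rw [show ∀ m : ℂ, z ^ 2 - (1 + β) * m * z + β * m = z ^ 2 - m * ((1 + β) * z - β) from
        fun m => by ring, div_mul_cancel₀ _ hc, sub_self]

end TAA

section SpecRad

variable {ι : Type*} [Fintype ι] {A : Matrix ι ι ℝ}

lemma finite_setOf_isCEigenvalue (A : Matrix ι ι ℝ) : {z : ℂ | IsCEigenvalue A z}.Finite := by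
  classical
  refine (Module.End.finite_hasEigenvalue (toLin' (A.map ofReal))).subset ?_
  rintro z ⟨v, hv, hAv⟩
  exact Module.End.hasEigenvalue_of_hasEigenvector
    ⟨Module.End.mem_eigenspace_iff.mpr (by rwa [toLin'_apply]), hv⟩

lemma norm_le_specRad {z : ℂ} (h : IsCEigenvalue A z) : ‖z‖ ≤ specRad A := by
  refine le_csSup ?_ ⟨z, h, rfl⟩
  obtain ⟨r, hr⟩ := ((finite_setOf_isCEigenvalue A).image (‖·‖)).bddAbove
  exact ⟨r, by rintro _ ⟨w, hw, rfl⟩; exact hr ⟨w, hw, rfl⟩⟩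

lemma specRad_nonneg : 0 ≤ specRad A :=
  Real.sSup_nonneg (by rintro _ ⟨z, -, rfl⟩; exact norm_nonneg z)

lemma specRad_le {ρ : ℝ} (hρ : 0 ≤ ρ) (h : ∀ z, IsCEigenvalue A z → ‖z‖ ≤ ρ) : specRad A ≤ ρ :=
  Real.sSup_le (by rintro _ ⟨z, hz, rfl⟩; exact h z hz) hρ

end SpecRad

section SpecRadTAA

variable {n : ℕ} {M : Matrix (Fin n) (Fin n) ℝ} {β ρ : ℝ}

lemma juryConditions_of_specRad_TAA_le {m : ℝ} {v : Fin n → ℝ} (hv : v ≠ 0)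
    (hMv : M *ᵥ v = m • v) (h : specRad (TAA M β) ≤ ρ) :
    JuryConditions ((1 + β) * m) (β * m) ρ := by
  refine juryConditions_of_forall_norm_le fun z hz => (norm_le_specRad ?_).trans h
  refine isCEigenvalue_TAA (v := ofReal ∘ v) (m := m) (fun h0 => hv ?_) ?_ ?_
  · exact funext fun i => by simpa using congrFun h0 i
  · rw [map_ofReal_mulVec_ofReal, hMv]; ext; simp
  · push_cast at hz; linear_combination hz

lemma specRad_TAA_le (hM : M.IsSymm) (hρ : 0 < ρ)
    (h : ∀ m : ℝ, (∃ v : Fin n → ℝ, v ≠ 0 ∧ M *ᵥ v = m • v) →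
      JuryConditions ((1 + β) * m) (β * m) ρ) :
    specRad (TAA M β) ≤ ρ := by
  refine specRad_le hρ.le fun z hz => ?_
  rcases eq_zero_or_exists_of_isCEigenvalue_TAA hz with rfl | ⟨m, v, hv, hMv, hq⟩
  · simpa using hρ.le
  have hm : m = (m.re : ℂ) :=
    Complex.ext rfl (by simpa using hM.im_eq_zero_of_mulVec_eq_smul hv hMv)
  rw [hm] at hMv hq
  exact norm_le_of_juryConditions hρ (h _ (exists_mulVec_eq_smul_of_map_ofReal hv hMv))
    (by push_cast; linear_combination hq)

end SpecRadTAA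

section Optimal

variable {n : ℕ} {H : Matrix (Fin n) (Fin n) ℝ} {ℓ L κ c α β : ℝ}

lemma one_sub_smul_mulVec_eq {μ : ℝ} {v : Fin n → ℝ} (h : H *ᵥ v = μ • v) :
    (1 - α • H) *ᵥ v = (1 - α * μ) • v := by
  rw [sub_mulVec, one_mulVec, smul_mulVec, h, smul_smul, sub_smul, one_smul]

lemma mulVec_eq_of_one_sub_smul_mulVec_eq {m : ℝ} {v : Fin n → ℝ} (hα : α ≠ 0)
    (h : (1 - α • H) *ᵥ v = m • v) : H *ᵥ v = ((1 - m) / α) • v := by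
  rw [sub_mulVec, one_mulVec, smul_mulVec] at h
  rw [div_eq_inv_mul, mul_smul, sub_smul, one_smul, ← h, sub_sub_cancel, smul_smul,
    inv_mul_cancel₀ hα, one_smul]

lemma eq_of_specRad_TAA_le {ρ : ℝ}
    (hℓ : ∃ v : Fin n → ℝ, v ≠ 0 ∧ H *ᵥ v = ℓ • v) (hL : ∃ v : Fin n → ℝ, v ≠ 0 ∧ H *ᵥ v = L • v)
    (hκL : L = κ * ℓ) (hκ : 1 < κ) (hc0 : 0 < c) (hc : c ^ 2 * (3 * κ + 1) = 4)
    (hρ : 0 < ρ) (hρc : ρ ≤ 1 - c) (h : specRad (TAA (1 - α • H) β) ≤ ρ) :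
    ρ = 1 - c ∧ α * ℓ = c ^ 2 ∧ β * (1 + c) = 1 - c := by
  obtain ⟨vℓ, hvℓ, hHvℓ⟩ := hℓ
  obtain ⟨vL, hvL, hHvL⟩ := hL
  have h₁ := juryConditions_of_specRad_TAA_le hvℓ (one_sub_smul_mulVec_eq hHvℓ) h
  have h₂ := juryConditions_of_specRad_TAA_le hvL (one_sub_smul_mulVec_eq hHvL) h
  rw [hκL, mul_left_comm] at h₂
  rw [← sub_sub_cancel 1 ρ] at h₁ h₂
  obtain ⟨hs, ht, hβ⟩ := eq_of_juryConditions_pair hκ hc0 hc (by linarith) (by linarith) h₁ h₂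
  exact ⟨by linarith, ht, hβ⟩

lemma one_sub_le_specRad_TAA
    (hℓ : ∃ v : Fin n → ℝ, v ≠ 0 ∧ H *ᵥ v = ℓ • v) (hL : ∃ v : Fin n → ℝ, v ≠ 0 ∧ H *ᵥ v = L • v)
    (hκL : L = κ * ℓ) (hκ : 1 < κ) (hc0 : 0 < c) (hc : c ^ 2 * (3 * κ + 1) = 4) :
    1 - c ≤ specRad (TAA (1 - α • H) β) := by
  by_contra! h
  obtain ⟨ρ, hρ₁, hρ₂⟩ := exists_between h
  have := eq_of_specRad_TAA_le hℓ hL hκL hκ hc0 hc (specRad_nonneg.trans_lt hρ₁) hρ₂.le hρ₁.le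
  linarith [this.1]

lemma specRad_TAA_optimal_le (hsymm : H.IsSymm)
    (hext : ∀ μ : ℝ, (∃ v : Fin n → ℝ, v ≠ 0 ∧ H *ᵥ v = μ • v) → ℓ ≤ μ ∧ μ ≤ L)
    (hℓ : 0 < ℓ) (hc0 : 0 < c) (hc1 : c < 1) (hc : c ^ 2 * (3 * L + ℓ) = 4 * ℓ) :
    specRad (TAA (1 - (4 / (3 * L + ℓ)) • H) ((1 - c) / (1 + c))) ≤ 1 - c := by
  have hD : 0 < 3 * L + ℓ := pos_of_mul_pos_right (hc.trans_gt (by linarith)) (sq_nonneg c)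
  have hα : 0 < 4 / (3 * L + ℓ) := by positivity
  refine specRad_TAA_le (isSymm_one.sub (hsymm.smul _)) (by linarith) fun m ⟨w, hw, hMw⟩ => ?_
  set α := 4 / (3 * L + ℓ)
  obtain ⟨hℓμ, hμL⟩ := hext _ ⟨w, hw, mulVec_eq_of_one_sub_smul_mulVec_eq hα.ne' hMw⟩
  have hm : m = 1 - α * ((1 - m) / α) := by field_simp; ring
  have hαℓ : α * ℓ = c ^ 2 := by
    simp only [α]; field_simp; linarith
  have hαL : 3 * (α * L) = 4 - c ^ 2 := by
    simp only [α]; field_simp; linarith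
  rw [hm]
  apply juryConditions_optimal hc0.le hc1.le
  · exact hαℓ ▸ mul_le_mul_of_nonneg_left hℓμ hα.le
  · exact hαL ▸ mul_le_mul_of_nonneg_left (mul_le_mul_of_nonneg_left hμL hα.le) zero_le_three

end Optimal

theorem stmt10_general (n : ℕ) (H : Matrix (Fin n) (Fin n) ℝ) (hsymm : H.IsSymm)
    (ℓ L : ℝ) (hℓ : 0 < ℓ) (hℓL : ℓ < L)
    (hℓeig : ∃ v : Fin n → ℝ, v ≠ 0 ∧ H.mulVec v = ℓ • v)
    (hLeig : ∃ v : Fin n → ℝ, v ≠ 0 ∧ H.mulVec v = L • v)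
    (hext : ∀ μ : ℝ, (∃ v : Fin n → ℝ, v ≠ 0 ∧ H.mulVec v = μ • v) → ℓ ≤ μ ∧ μ ≤ L)
    (κ : ℝ) (hκ : κ = L / ℓ) :
    (Real.sqrt (3 * κ + 1) - 2) / Real.sqrt (3 * κ + 1)
      = 1 - Real.sqrt (4 * ℓ / (3 * L + ℓ)) ∧
    (∀ α β : ℝ, 0 < α →
      1 - Real.sqrt (4 * ℓ / (3 * L + ℓ))
        ≤ specRad (TAA ((1 : Matrix (Fin n) (Fin n) ℝ) - α • H) β)) ∧
    specRad (TAA ((1 : Matrix (Fin n) (Fin n) ℝ) - (4 / (3 * L + ℓ)) • H)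
        ((Real.sqrt (3 * κ + 1) - 2) / (Real.sqrt (3 * κ + 1) + 2)))
      = 1 - Real.sqrt (4 * ℓ / (3 * L + ℓ)) ∧
    (∀ α β : ℝ, 0 < α →
      specRad (TAA ((1 : Matrix (Fin n) (Fin n) ℝ) - α • H) β)
          = 1 - Real.sqrt (4 * ℓ / (3 * L + ℓ)) →
        α = 4 / (3 * L + ℓ) ∧
        β = (Real.sqrt (3 * κ + 1) - 2) / (Real.sqrt (3 * κ + 1) + 2)) ∧
    1 - Real.sqrt (4 * ℓ / (3 * L + ℓ)) < 1 - Real.sqrt (ℓ / L) := by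
  have hD : 0 < 3 * L + ℓ := by linarith
  set c := √(4 * ℓ / (3 * L + ℓ))
  have hc0 : 0 < c := Real.sqrt_pos.mpr (by positivity)
  have hcL : c ^ 2 * (3 * L + ℓ) = 4 * ℓ := by
    rw [Real.sq_sqrt (by positivity)]; field_simp
  have hκL : L = κ * ℓ := by rw [hκ]; field_simp
  have hκ1 : 1 < κ := by rw [hκ]; exact (one_lt_div hℓ).mpr hℓL
  have hcκ : c ^ 2 * (3 * κ + 1) = 4 := by
    apply mul_right_cancel₀ hℓ.ne'; linear_combination hcL - 3 * c ^ 2 * hκL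
  have hc1 := lt_one_of_sq_mul_eq_four hκ1 hcκ
  have hsqrt : √(3 * κ + 1) = 2 / c := by
    rw [Real.sqrt_eq_iff_mul_self_eq_of_pos (by positivity)]; field_simp; linarith
  have hβ : (2 / c - 2) / (2 / c + 2) = (1 - c) / (1 + c) := by field_simp
  have lower := fun α β => one_sub_le_specRad_TAA (α := α) (β := β) hℓeig hLeig hκL hκ1 hc0 hcκ
  refine ⟨by rw [hsqrt]; field_simp, fun α β _ => lower α β, ?_, fun α β _ h => ?_, ?_⟩
  · rw [hsqrt, hβ]
    exact (specRad_TAA_optimal_le hsymm hext hℓ hc0 hc1 hcL).antisymm (lower _ _)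
  · obtain ⟨-, hαℓ, hβc⟩ :=
      eq_of_specRad_TAA_le hℓeig hLeig hκL hκ1 hc0 hcκ (by linarith) le_rfl h.le
    constructor
    · rw [eq_div_iff hD.ne']
      apply mul_right_cancel₀ hℓ.ne'
      linear_combination (3 * L + ℓ) * hαℓ + hcL
    · rw [hsqrt, hβ, eq_div_iff (by linarith)]; exact hβc
  · exact sub_lt_sub_left (Real.sqrt_lt_sqrt (div_nonneg hℓ.le (by linarith)) (by
      rw [div_lt_div_iff₀ (by linarith) hD]; nlinarith)) 1

theorem stmt10 (n : ℕ) (H : Matrix (Fin n) (Fin n) ℝ) (hsymm : H.IsSymm) (hpd : H.PosDef)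
    (ℓ L : ℝ) (hℓ : 0 < ℓ) (hℓL : ℓ < L)
    (hℓeig : ∃ v : Fin n → ℝ, v ≠ 0 ∧ H.mulVec v = ℓ • v)
    (hLeig : ∃ v : Fin n → ℝ, v ≠ 0 ∧ H.mulVec v = L • v)
    (hext : ∀ μ : ℝ, (∃ v : Fin n → ℝ, v ≠ 0 ∧ H.mulVec v = μ • v) → ℓ ≤ μ ∧ μ ≤ L)
    (κ : ℝ) (hκ : κ = L / ℓ) :
    (Real.sqrt (3 * κ + 1) - 2) / Real.sqrt (3 * κ + 1)
      = 1 - Real.sqrt (4 * ℓ / (3 * L + ℓ)) ∧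
    (∀ α β : ℝ, 0 < α →
      1 - Real.sqrt (4 * ℓ / (3 * L + ℓ))
        ≤ specRad (TAA ((1 : Matrix (Fin n) (Fin n) ℝ) - α • H) β)) ∧
    specRad (TAA ((1 : Matrix (Fin n) (Fin n) ℝ) - (4 / (3 * L + ℓ)) • H)
        ((Real.sqrt (3 * κ + 1) - 2) / (Real.sqrt (3 * κ + 1) + 2)))
      = 1 - Real.sqrt (4 * ℓ / (3 * L + ℓ)) ∧
    (∀ α β : ℝ, 0 < α →
      specRad (TAA ((1 : Matrix (Fin n) (Fin n) ℝ) - α • H) β)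
          = 1 - Real.sqrt (4 * ℓ / (3 * L + ℓ)) →
        α = 4 / (3 * L + ℓ) ∧
        β = (Real.sqrt (3 * κ + 1) - 2) / (Real.sqrt (3 * κ + 1) + 2)) ∧
    1 - Real.sqrt (4 * ℓ / (3 * L + ℓ)) < 1 - Real.sqrt (ℓ / L) :=
  stmt10_general n H hsymm ℓ L hℓ hℓL hℓeig hLeig hext κ hκ
end

section
/- For all real numbers μ₁, μ₂ with 0 < |μ₁| < |μ₂| < 1, one has maxT(μ₁, βN(μ₂)) = |μ₂|/(1+√(1−μ₂²)) = min_{β∈ℝ} maxT(μ₂,β); that is, evaluating the first quantity at the coefficient optimal for μ₂ gives exactly the optimal value for μ₂. -/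
/-- The maximum of the moduli of the two complex roots (counted with multiplicity) of
`λ² − (1+β)·μ·λ + β = 0`; the roots are given by the quadratic formula
`((1+β)μ ± √((1+β)²μ² − 4β))/2` (complex square root via `cpow`). -/
noncomputable def maxT (μ β : ℝ) : ℝ :=
  max (‖(((((1 + β) * μ : ℝ) : ℂ) +
        ((((1 + β) ^ 2 * μ ^ 2 - 4 * β : ℝ) : ℂ)) ^ ((1 : ℂ) / 2)) / 2)‖)
      (‖(((((1 + β) * μ : ℝ) : ℂ) -
        ((((1 + β) ^ 2 * μ ^ 2 - 4 * β : ℝ) : ℂ)) ^ ((1 : ℂ) / 2)) / 2)‖)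

/-- The optimal coefficient `βN(μ) = (1 − √(1−μ²))/(1 + √(1−μ²))`. -/
noncomputable def βN (μ : ℝ) : ℝ :=
  (1 - Real.sqrt (1 - μ ^ 2)) / (1 + Real.sqrt (1 - μ ^ 2))

/-!
Write `t = |μ₂| / (1 + √(1 - μ₂²))`, so that `βN μ₂ = t²` and `|μ₂| (1 + t²) = 2t`.
At `β = t²` the discriminant `(1+β)²μ² - 4β` vanishes for `μ = μ₂` and is negative
for `|μ| < |μ₂|`; the roots are then complex conjugate with modulus `√β = t`.
For the lower bound, complex roots have modulus `√β`, and the discriminant condition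
reads `(t² - β)(1 - β t²) ≤ 0`, forcing `β ≥ t²`. Real roots `a, b` satisfy
`a + b = (1 + ab) μ`, which is impossible when `|a|, |b| < t`, since then
`|a + b| (1 + t²) < 2t (1 + ab)`.
-/

open Complex in
lemma Complex.ofReal_cpow_half_of_nonneg {d : ℝ} (hd : 0 ≤ d) :
    (d : ℂ) ^ ((1 : ℂ) / 2) = (Real.sqrt d : ℂ) := by
  rw [Real.sqrt_eq_rpow, ofReal_cpow hd]
  push_cast
  rfl

open Complex in
lemma Complex.ofReal_cpow_half_of_nonpos {d : ℝ} (hd : d ≤ 0) :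
    (d : ℂ) ^ ((1 : ℂ) / 2) = I * (Real.sqrt (-d) : ℂ) := by
  have hneg : (-(d : ℂ)) ^ ((1 : ℂ) / 2) = (Real.sqrt (-d) : ℂ) := by
    simpa using ofReal_cpow_half_of_nonneg (neg_nonneg.mpr hd)
  have hhalf : (Real.pi : ℂ) * I * ((1 : ℂ) / 2) = ((Real.pi / 2 : ℝ) : ℂ) * I := by
    push_cast; ring
  rw [ofReal_cpow_of_nonpos hd, hneg, hhalf, exp_mul_I, ← ofReal_cos, ← ofReal_sin,
    Real.cos_pi_div_two, Real.sin_pi_div_two]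
  push_cast
  ring

lemma maxT_of_discr_nonpos {μ β : ℝ} (h : (1 + β) ^ 2 * μ ^ 2 - 4 * β ≤ 0) :
    maxT μ β = Real.sqrt β := by
  have hr : Real.sqrt (-((1 + β) ^ 2 * μ ^ 2 - 4 * β)) ^ 2 = -((1 + β) ^ 2 * μ ^ 2 - 4 * β) :=
    Real.sq_sqrt (by linarith)
  set r := Real.sqrt (-((1 + β) ^ 2 * μ ^ 2 - 4 * β))
  have hplus : (((1 + β) * μ : ℝ) : ℂ) + Complex.I * r =
      ((1 + β) * μ : ℝ) + (r : ℝ) * Complex.I := by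
    ring
  have hminus : (((1 + β) * μ : ℝ) : ℂ) - Complex.I * r =
      ((1 + β) * μ : ℝ) + ((-r : ℝ) : ℂ) * Complex.I := by
    push_cast; ring
  rw [maxT, Complex.ofReal_cpow_half_of_nonpos h, hplus, hminus, norm_div, norm_div,
    Complex.norm_add_mul_I, Complex.norm_add_mul_I, neg_sq, max_self, Complex.norm_two,
    show ((1 + β) * μ) ^ 2 + r ^ 2 = 2 ^ 2 * β by nlinarith,
    Real.sqrt_mul (by positivity), Real.sqrt_sq zero_le_two]
  ring

lemma maxT_of_discr_nonneg {μ β : ℝ} (h : 0 ≤ (1 + β) ^ 2 * μ ^ 2 - 4 * β) :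
    maxT μ β = max |((1 + β) * μ + Real.sqrt ((1 + β) ^ 2 * μ ^ 2 - 4 * β)) / 2|
      |((1 + β) * μ - Real.sqrt ((1 + β) ^ 2 * μ ^ 2 - 4 * β)) / 2| := by
  rw [maxT, Complex.ofReal_cpow_half_of_nonneg h, ← Complex.ofReal_add, ← Complex.ofReal_sub,
    ← Complex.ofReal_ofNat, ← Complex.ofReal_div, ← Complex.ofReal_div, Complex.norm_real,
    Complex.norm_real, Real.norm_eq_abs, Real.norm_eq_abs]

lemma abs_add_mul_one_add_sq_lt {a b t : ℝ} (ha : |a| < t) (hb : |b| < t) (ht : t ≤ 1) :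
    |a + b| * (1 + t ^ 2) < 2 * t * (1 + a * b) := by
  obtain ⟨ha₁, ha₂⟩ := abs_lt.mp ha
  obtain ⟨hb₁, hb₂⟩ := abs_lt.mp hb
  have ht₀ : 0 < t := by linarith
  have hta : |t * a| < 1 := by rw [abs_mul, abs_of_pos ht₀]; nlinarith [abs_nonneg a]
  have htb : |t * b| < 1 := by rw [abs_mul, abs_of_pos ht₀]; nlinarith [abs_nonneg b]
  obtain ⟨hta₁, hta₂⟩ := abs_lt.mp hta
  obtain ⟨htb₁, htb₂⟩ := abs_lt.mp htb
  rw [← abs_of_pos (by positivity : (0 : ℝ) < 1 + t ^ 2), ← abs_mul, abs_lt]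
  -- `2t(1 + ab) ∓ (a + b)(1 + t²) = (t ∓ a)(1 ∓ tb) + (t ∓ b)(1 ∓ ta)`
  constructor
  · nlinarith [mul_pos (by linarith : 0 < t + a) (by linarith : 0 < 1 + t * b),
      mul_pos (by linarith : 0 < t + b) (by linarith : 0 < 1 + t * a)]
  · nlinarith [mul_pos (by linarith : 0 < t - a) (by linarith : 0 < 1 - t * b),
      mul_pos (by linarith : 0 < t - b) (by linarith : 0 < 1 - t * a)]

section LowerBound

variable {μ t : ℝ} (ht₁ : t ≤ 1) (hμ : |μ| * (1 + t ^ 2) = 2 * t)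
include ht₁ hμ

lemma le_maxT_of_discr_nonpos (ht₀ : 0 ≤ t) {β : ℝ} (h : (1 + β) ^ 2 * μ ^ 2 - 4 * β ≤ 0) :
    t ≤ maxT μ β := by
  rw [maxT_of_discr_nonpos h]
  have hβ : 0 ≤ β := by nlinarith [sq_nonneg ((1 + β) * μ)]
  have hμsq : μ ^ 2 * (1 + t ^ 2) ^ 2 = 4 * t ^ 2 := by
    rw [← sq_abs μ, ← mul_pow, hμ]; ring
  have hprod : (t ^ 2 - β) * (1 - β * t ^ 2) ≤ 0 := by
    nlinarith [mul_le_mul_of_nonneg_right h (sq_nonneg (1 + t ^ 2))]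
  have ht2 : t ^ 2 ≤ 1 := pow_le_one₀ ht₀ ht₁
  refine Real.le_sqrt_of_sq_le ?_
  by_contra! hlt
  nlinarith [mul_le_mul_of_nonneg_left hlt.le hβ]

lemma le_maxT_of_discr_nonneg {β : ℝ} (h : 0 ≤ (1 + β) ^ 2 * μ ^ 2 - 4 * β) :
    t ≤ maxT μ β := by
  rw [maxT_of_discr_nonneg h]
  have hr := Real.sq_sqrt h
  set r := Real.sqrt ((1 + β) ^ 2 * μ ^ 2 - 4 * β)
  set a := ((1 + β) * μ + r) / 2
  set b := ((1 + β) * μ - r) / 2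
  have hsum : a + b = (1 + β) * μ := by ring
  have hprod : a * b = β := by simp only [a, b]; nlinarith
  by_contra! hlt
  obtain ⟨ha, hb⟩ := max_lt_iff.mp hlt
  have ht₀ : 0 < t := (abs_nonneg a).trans_lt ha
  have hlt' := abs_add_mul_one_add_sq_lt ha hb ht₁
  rw [hsum, hprod, abs_mul, mul_assoc, hμ] at hlt'
  nlinarith [le_abs_self (1 + β)]

lemma le_maxT (ht₀ : 0 ≤ t) (β : ℝ) : t ≤ maxT μ β := by
  rcases le_total ((1 + β) ^ 2 * μ ^ 2 - 4 * β) 0 with h | h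
  · exact le_maxT_of_discr_nonpos ht₁ hμ ht₀ h
  · exact le_maxT_of_discr_nonneg ht₁ hμ h

end LowerBound

lemma maxT_sq_of_le {μ t : ℝ} (ht₀ : 0 ≤ t) (h : |μ| * (1 + t ^ 2) ≤ 2 * t) :
    maxT μ (t ^ 2) = t := by
  have hsq := pow_le_pow_left₀ (by positivity) h 2
  rw [mul_pow, sq_abs] at hsq
  rw [maxT_of_discr_nonpos (by linarith), Real.sqrt_sq ht₀]

noncomputable def ρN (μ : ℝ) : ℝ :=
  |μ| / (1 + Real.sqrt (1 - μ ^ 2))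

lemma ρN_nonneg (μ : ℝ) : 0 ≤ ρN μ := by
  unfold ρN; positivity

section OptimalRate

variable {μ : ℝ}

lemma ρN_le_one (h : |μ| ≤ 1) : ρN μ ≤ 1 := by
  unfold ρN
  rw [div_le_one (by positivity)]
  linarith [Real.sqrt_nonneg (1 - μ ^ 2)]

lemma βN_eq_ρN_sq (h : |μ| ≤ 1) : βN μ = ρN μ ^ 2 := by
  have hs : Real.sqrt (1 - μ ^ 2) ^ 2 = 1 - μ ^ 2 :=
    Real.sq_sqrt (by nlinarith [sq_abs μ, abs_nonneg μ])
  have hs₀ : 0 < 1 + Real.sqrt (1 - μ ^ 2) := by positivity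
  rw [βN, ρN, div_pow, sq_abs, div_eq_div_iff hs₀.ne' (by positivity)]
  nlinarith

lemma abs_mul_one_add_ρN_sq (h : |μ| ≤ 1) : |μ| * (1 + ρN μ ^ 2) = 2 * ρN μ := by
  rw [← βN_eq_ρN_sq h, βN, ρN]
  field_simp
  ring

end OptimalRate

theorem stmt14_general (μ₁ μ₂ : ℝ) (h12 : |μ₁| < |μ₂|) (h2 : |μ₂| < 1) :
    maxT μ₁ (βN μ₂) = |μ₂| / (1 + Real.sqrt (1 - μ₂ ^ 2)) ∧
    (∀ β : ℝ, |μ₂| / (1 + Real.sqrt (1 - μ₂ ^ 2)) ≤ maxT μ₂ β) ∧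
    maxT μ₂ (βN μ₂) = |μ₂| / (1 + Real.sqrt (1 - μ₂ ^ 2)) := by
  have hμ₂ : |μ₂| ≤ 1 := h2.le
  have hρ := abs_mul_one_add_ρN_sq hμ₂
  have hμ₁ : |μ₁| * (1 + ρN μ₂ ^ 2) ≤ 2 * ρN μ₂ :=
    hρ ▸ mul_le_mul_of_nonneg_right h12.le (by positivity)
  rw [βN_eq_ρN_sq hμ₂]
  exact ⟨maxT_sq_of_le (ρN_nonneg μ₂) hμ₁, le_maxT (ρN_le_one hμ₂) hρ (ρN_nonneg μ₂),
    maxT_sq_of_le (ρN_nonneg μ₂) hρ.le⟩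

theorem stmt14 (μ₁ μ₂ : ℝ) (h0 : 0 < |μ₁|) (h12 : |μ₁| < |μ₂|) (h2 : |μ₂| < 1) :
    maxT μ₁ (βN μ₂) = |μ₂| / (1 + Real.sqrt (1 - μ₂ ^ 2)) ∧
    (∀ β : ℝ, |μ₂| / (1 + Real.sqrt (1 - μ₂ ^ 2)) ≤ maxT μ₂ β) ∧
    maxT μ₂ (βN μ₂) = |μ₂| / (1 + Real.sqrt (1 - μ₂ ^ 2)) :=
  stmt14_general μ₁ μ₂ h12 h2
end

section
/- Let B be an n×n real matrix whose spectral radius ρ_B satisfies 0 < ρ_B < 1, and assume there exists a real eigenvalue μ of B with |μ| = ρ_B. Then for every β ∈ ℝ the spectral radius of T_N(B,β) satisfies ρ(T_N(B,β)) ≥ ρ_B/(1 + √(1−ρ_B²)); and if ρ(T_N(B,β)) = ρ_B/(1+√(1−ρ_B²)) for some β ∈ ℝ, then β = (1−√(1−ρ_B²))/(1+√(1−ρ_B²)). -/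
/-- The block matrix `T_N(M,β) = [[(1+β)M, −βI],[I, 0]]` (Jacobian of sNGMRES-R(1)). -/
noncomputable def TN {n : ℕ} (M : Matrix (Fin n) (Fin n) ℝ) (β : ℝ) :
    Matrix (Fin n ⊕ Fin n) (Fin n ⊕ Fin n) ℝ :=
  Matrix.fromBlocks ((1 + β) • M) ((-β) • (1 : Matrix (Fin n) (Fin n) ℝ))
    (1 : Matrix (Fin n) (Fin n) ℝ) 0

/-!
If `B v = μ v`, then for every root `λ` of `λ² - (1 + β) μ λ + β` the vector `(λ v, v)` is an
eigenvector of `T_N(B, β)` for `λ`, so it suffices to find such a root of modulus at least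
`r = ρ / (1 + s)`, `s = √(1 - ρ²)`, strictly larger unless `β = r²`. If `|β| > r²`, one of the two
roots has modulus at least `√|β|`, as their product is `β`. Otherwise, taking `μ = ρ` up to sign, the
largest real root is `((1 + β) ρ + √D) / 2`, and `r ρ = 1 - s` gives
`D = (2 r - (1 + β) ρ)² + 4 s (r² - β) ≥ (2 r - (1 + β) ρ)²`.
-/

open Matrix

lemma finite_setOf_isCEigenvalue_s17 {m : Type*} [Fintype m] (A : Matrix m m ℝ) :
    {lam | IsCEigenvalue A lam}.Finite :=
  (Module.End.finite_hasEigenvalue (A.map Complex.ofReal).mulVecLin).subset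
    fun _ ⟨_, hv0, hv⟩ => Module.End.hasEigenvalue_of_hasEigenvector
      (Module.End.hasEigenvector_iff.mpr ⟨Module.End.mem_eigenspace_iff.mpr hv, hv0⟩)

lemma IsCEigenvalue.norm_le_specRad {m : Type*} [Fintype m] {A : Matrix m m ℝ} {lam : ℂ}
    (h : IsCEigenvalue A lam) : ‖lam‖ ≤ specRad A := by
  refine le_csSup ?_ ⟨lam, h, rfl⟩
  refine ((finite_setOf_isCEigenvalue_s17 A).image (‖·‖)).bddAbove.mono ?_
  rintro _ ⟨l, hl, rfl⟩
  exact ⟨l, hl, rfl⟩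

lemma exists_root_norm_sq_ge (a b : ℂ) : ∃ l : ℂ, l ^ 2 - a * l + b = 0 ∧ ‖b‖ ≤ ‖l‖ ^ 2 := by
  obtain ⟨w, hw⟩ := IsAlgClosed.exists_pow_nat_eq (a ^ 2 - 4 * b) two_pos
  set l₁ := (a + w) / 2
  set l₂ := (a - w) / 2
  have h₁ : l₁ ^ 2 - a * l₁ + b = 0 := by linear_combination hw / 4
  have h₂ : l₂ ^ 2 - a * l₂ + b = 0 := by linear_combination hw / 4
  have hprod : ‖l₁‖ * ‖l₂‖ = ‖b‖ := by
    rw [← norm_mul]; congr 1; linear_combination -hw / 4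
  rcases le_total ‖l₁‖ ‖l₂‖ with h | h
  · exact ⟨l₂, h₂, by nlinarith [norm_nonneg l₁]⟩
  · exact ⟨l₁, h₁, by nlinarith [norm_nonneg l₂]⟩

noncomputable def optimalRate (ρ : ℝ) : ℝ := ρ / (1 + √(1 - ρ ^ 2))

lemma optimalRate_mul {ρ : ℝ} (hρ : |ρ| ≤ 1) : optimalRate ρ * ρ = 1 - √(1 - ρ ^ 2) := by
  have hs : √(1 - ρ ^ 2) ^ 2 = 1 - ρ ^ 2 :=
    Real.sq_sqrt (sub_nonneg.2 ((sq_le_one_iff_abs_le_one ρ).2 hρ))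
  have hpos : 0 < 1 + √(1 - ρ ^ 2) := by positivity
  rw [optimalRate, div_mul_eq_mul_div, div_eq_iff hpos.ne']
  linear_combination hs

lemma optimalRate_sq {ρ : ℝ} (hρ : |ρ| ≤ 1) :
    optimalRate ρ ^ 2 = (1 - √(1 - ρ ^ 2)) / (1 + √(1 - ρ ^ 2)) := by
  rw [← optimalRate_mul hρ, optimalRate]
  ring

lemma exists_real_root_ge_optimalRate {ρ β : ℝ} (hρ : |ρ| < 1) (hβ : β ≤ optimalRate ρ ^ 2) :
    ∃ y : ℝ, y ^ 2 - (1 + β) * ρ * y + β = 0 ∧ optimalRate ρ ≤ y ∧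
      (β < optimalRate ρ ^ 2 → optimalRate ρ < y) := by
  set s := √(1 - ρ ^ 2)
  set r := optimalRate ρ
  have hr : r * (1 + s) = ρ := div_mul_cancel₀ ρ (by positivity)
  have hrρ : r * ρ = 1 - s := optimalRate_mul hρ.le
  set c := 2 * r - (1 + β) * ρ
  have hdisc : ((1 + β) * ρ) ^ 2 - 4 * β = c ^ 2 + 4 * s * (r ^ 2 - β) := by
    linear_combination (-4 * r) * hr + 4 * β * hrρ
  have hgap : 0 ≤ 4 * s * (r ^ 2 - β) := by
    have := Real.sqrt_nonneg (1 - ρ ^ 2); have := sub_nonneg.2 hβ; positivity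
  set t := √(((1 + β) * ρ) ^ 2 - 4 * β)
  have ht : t ^ 2 = c ^ 2 + 4 * s * (r ^ 2 - β) :=
    hdisc ▸ Real.sq_sqrt (by nlinarith [sq_nonneg c])
  have ht0 : 0 ≤ t := Real.sqrt_nonneg _
  refine ⟨((1 + β) * ρ + t) / 2, by linear_combination ht / 4 - hdisc / 4, ?_, fun hlt => ?_⟩
  · nlinarith
  · have : 0 < s := Real.sqrt_pos.2 (sub_pos.2 ((sq_lt_one_iff_abs_lt_one ρ).2 hρ))
    nlinarith

lemma exists_complex_root_norm_ge_optimalRate {ρ μ : ℝ} (hμ : |μ| = ρ) (hρ : ρ < 1) (β : ℝ) :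
    ∃ l : ℂ, l ^ 2 - (1 + β) * μ * l + β = 0 ∧ optimalRate ρ ≤ ‖l‖ ∧
      (β ≠ optimalRate ρ ^ 2 → optimalRate ρ < ‖l‖) := by
  have hρ0 : 0 ≤ ρ := hμ ▸ abs_nonneg μ
  have hr0 : 0 ≤ optimalRate ρ := by unfold optimalRate; positivity
  by_cases hβ : optimalRate ρ ^ 2 < |β|
  · obtain ⟨l, hl, hnorm⟩ := exists_root_norm_sq_ge ((1 + β) * μ) β
    rw [Complex.norm_real, Real.norm_eq_abs] at hnorm
    have hlt : optimalRate ρ < ‖l‖ :=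
      (pow_lt_pow_iff_left₀ hr0 (norm_nonneg l) two_ne_zero).1 (hβ.trans_le hnorm)
    exact ⟨l, hl, hlt.le, fun _ => hlt⟩
  have hβ' := (le_abs_self β).trans (not_lt.1 hβ)
  obtain ⟨y, hy, hle, hlt⟩ := exists_real_root_ge_optimalRate (abs_lt.2 ⟨by linarith, hρ⟩) hβ'
  have hyC : (y : ℂ) ^ 2 - (1 + β) * ρ * y + β = 0 := by exact_mod_cast hy
  have hnorm : ‖(y : ℂ)‖ = y := by rw [Complex.norm_real, Real.norm_of_nonneg (hr0.trans hle)]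
  have hstrict : β ≠ optimalRate ρ ^ 2 → optimalRate ρ < y := fun hne => hlt (hβ'.lt_of_ne hne)
  rcases (abs_eq hρ0).1 hμ with rfl | rfl
  · exact ⟨y, hyC, by rwa [hnorm], by rwa [hnorm]⟩
  · exact ⟨-y, by push_cast; linear_combination hyC, by rwa [norm_neg, hnorm],
      by rwa [norm_neg, hnorm]⟩

lemma isCEigenvalue_TN {n : ℕ} {B : Matrix (Fin n) (Fin n) ℝ} {β : ℝ} {μ l : ℂ}
    {w : Fin n → ℂ} (hw : w ≠ 0) (hBw : B.map Complex.ofReal *ᵥ w = μ • w)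
    (hl : l ^ 2 - (1 + β) * μ * l + β = 0) : IsCEigenvalue (TN B β) l := by
  refine ⟨Sum.elim (l • w) w, fun h => hw (funext fun i => by simpa using congrFun h (.inr i)), ?_⟩
  have hmap : (TN B β).map Complex.ofReal =
      fromBlocks ((1 + β : ℂ) • B.map Complex.ofReal) (-(β : ℂ) • 1) 1 0 := by
    ext (i | i) (j | j) <;> by_cases h : i = j <;> simp [TN, one_apply, h]
  rw [hmap, fromBlocks_mulVec]
  ext (i | i)
  · simp only [Sum.elim_comp_inl, mulVec_smul, smul_mulVec, hBw, neg_smul, Complex.coe_smul,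
      Sum.elim_comp_inr, neg_mulVec, one_mulVec, zero_mulVec, add_zero, Sum.elim_inl, Pi.add_apply,
      Pi.smul_apply, smul_eq_mul, Pi.neg_apply, Complex.real_smul]
    linear_combination (-w i) * hl
  · simp

theorem stmt17_general (n : ℕ) (B : Matrix (Fin n) (Fin n) ℝ) (ρB : ℝ)
    (h1 : ρB < 1)
    (heig : ∃ μ : ℝ, |μ| = ρB ∧ ∃ v : Fin n → ℝ, v ≠ 0 ∧ B.mulVec v = μ • v) :
    (∀ β : ℝ, ρB / (1 + Real.sqrt (1 - ρB ^ 2)) ≤ specRad (TN B β)) ∧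
    (∀ β : ℝ, specRad (TN B β) = ρB / (1 + Real.sqrt (1 - ρB ^ 2)) →
      β = (1 - Real.sqrt (1 - ρB ^ 2)) / (1 + Real.sqrt (1 - ρB ^ 2))) := by
  obtain ⟨μ, hμ, v, hv, hBv⟩ := heig
  have hw : Complex.ofReal ∘ v ≠ 0 := fun h => hv (funext fun i => by simpa using congrFun h i)
  have hBw : B.map Complex.ofReal *ᵥ (Complex.ofReal ∘ v) = (μ : ℂ) • (Complex.ofReal ∘ v) :=
    funext fun i => (Complex.ofRealHom.map_mulVec B v i).symm.trans (by simp [hBv])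
  have key (β : ℝ) : ∃ l, IsCEigenvalue (TN B β) l ∧ optimalRate ρB ≤ ‖l‖ ∧
      (β ≠ optimalRate ρB ^ 2 → optimalRate ρB < ‖l‖) := by
    obtain ⟨l, hl, hle, hlt⟩ := exists_complex_root_norm_ge_optimalRate hμ h1 β
    exact ⟨l, isCEigenvalue_TN hw hBw hl, hle, hlt⟩
  refine ⟨fun β => ?_, fun β hβ => ?_⟩
  · obtain ⟨l, hl, hle, -⟩ := key β
    exact hle.trans hl.norm_le_specRad
  · have hρ : |ρB| ≤ 1 := by rw [← hμ, abs_abs, hμ]; exact h1.le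
    rw [← optimalRate_sq hρ]
    by_contra hne
    obtain ⟨l, hl, -, hlt⟩ := key β
    exact (hlt hne).not_ge (hl.norm_le_specRad.trans hβ.le)

theorem stmt17 (n : ℕ) (B : Matrix (Fin n) (Fin n) ℝ) (ρB : ℝ)
    (h0 : 0 < ρB) (h1 : ρB < 1)
    (hρ : specRad B = ρB)
    (heig : ∃ μ : ℝ, |μ| = ρB ∧ ∃ v : Fin n → ℝ, v ≠ 0 ∧ B.mulVec v = μ • v) :
    (∀ β : ℝ, ρB / (1 + Real.sqrt (1 - ρB ^ 2)) ≤ specRad (TN B β)) ∧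
    (∀ β : ℝ, specRad (TN B β) = ρB / (1 + Real.sqrt (1 - ρB ^ 2)) →
      β = (1 - Real.sqrt (1 - ρB ^ 2)) / (1 + Real.sqrt (1 - ρB ^ 2))) :=
  stmt17_general n B ρB h1 heig
end
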